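/- arXiv:1908.01218 — 2 statements merged into one kernel-verified Lean document; each statement's English description precedes it below -/
import Mathlib

section
/- Let n ≥ 1 and let D be a set of non-empty subsets of {1,…,n} such that (1) {i} ∈ D for every i ∈ {1,…,n} and (2) any two members of D are either nested or disjoint. For J ∈ D with |J| ≥ 2 let δ(J) = #{J' ∈ D : J' ⋖ J}, where J' ⋖ J means J' ⊊ J and there is no K ∈ D with J' ⊊ K ⊊ J, and set m(D) = ∏_{J ∈ D, |J| ≥ 2} δ(J). Then m(D) = 2^{n−1} holds if and only if #{J ∈ D : |J| ≥ 2} = n − 1 and δ(J) = 2 for every J ∈ D with |J| ≥ 2. -/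
open Finset
open scoped Classical

/-- `J' ⋖ J` in `D`: `J' ⊊ J` and there is no `K ∈ D` with `J' ⊊ K ⊊ J`. -/
def CoversIn {n : ℕ} (D : Finset (Finset (Fin n))) (J' J : Finset (Fin n)) : Prop :=
  J' ⊂ J ∧ ¬ ∃ K ∈ D, J' ⊂ K ∧ K ⊂ J

/-- `δ(J)`: the number of `J' ∈ D` covered by `J`. -/
noncomputable def delta {n : ℕ} (D : Finset (Finset (Fin n))) (J : Finset (Fin n)) : ℕ :=
  (D.filter (fun J' => CoversIn D J' J)).card

/-- `m(D) = ∏_{J ∈ D, |J| ≥ 2} δ(J)`. -/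
noncomputable def mInv {n : ℕ} (D : Finset (Finset (Fin n))) : ℕ :=
  ∏ J ∈ D.filter (fun J => 2 ≤ J.card), delta D J

/-!
Every `J ∈ D` with `|J| ≥ 2` covers at least two members of `D` (maximal proper members
through two different points of `J`). By laminarity a member of `D` is covered by at most one
`J`, and a maximal member by none, so `∑ δ(J) ≤ |D| - 1 = #{J : |J| ≥ 2} + n - 1`, that is
`∑ (δ(J) - 1) ≤ n - 1` over `|J| ≥ 2`. As `d ≤ 2^(d-1)` with equality only for `d ≤ 2`,
`m(D) ≤ 2^(∑ (δ(J) - 1)) ≤ 2^(n-1)`, equality forces `δ(J) = 2` throughout, and then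
`m(D) = 2^#{J : |J| ≥ 2}`.
-/

lemma lt_two_pow_pred {d : ℕ} (hd : 3 ≤ d) : d < 2 ^ (d - 1) := by
  induction d, hd using Nat.le_induction with
  | base => norm_num
  | succ d hd ih =>
    rw [show d + 1 - 1 = d - 1 + 1 by omega, pow_succ]
    omega

lemma prod_lt_two_pow_sum_pred {ι : Type*} {s : Finset ι} {f : ι → ℕ}
    (hf : ∀ i ∈ s, 1 ≤ f i) (h : ∃ i ∈ s, 3 ≤ f i) :
    ∏ i ∈ s, f i < 2 ^ ∑ i ∈ s, (f i - 1) := by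
  rw [← prod_pow_eq_pow_sum]
  refine prod_lt_prod hf (fun i hi => ?_) (h.imp fun i ⟨hi, h3⟩ => ⟨hi, lt_two_pow_pred h3⟩)
  rcases Nat.lt_or_ge (f i) 3 with h3 | h3
  · interval_cases f i <;> norm_num
  · exact (lt_two_pow_pred h3).le

section Laminar

variable {n : ℕ} {D : Finset (Finset (Fin n))}

lemma CoversIn.eq_of_subset {J' J K : Finset (Fin n)} (h : CoversIn D J' J) (hK : K ∈ D)
    (hJ'K : J' ⊂ K) (hKJ : K ⊆ J) : K = J :=
  by_contra fun hKJ' => h.2 ⟨K, hK, hJ'K, hKJ.ssubset_of_ne hKJ'⟩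

lemma CoversIn.eq_of_laminar (hlaminar : ∀ J ∈ D, ∀ J' ∈ D, J ⊆ J' ∨ J' ⊆ J ∨ J ∩ J' = ∅)
    {J' J₁ J₂ : Finset (Fin n)} (hJ' : J'.Nonempty) (h₁ : J₁ ∈ D) (h₂ : J₂ ∈ D)
    (c₁ : CoversIn D J' J₁) (c₂ : CoversIn D J' J₂) : J₁ = J₂ := by
  rcases hlaminar J₁ h₁ J₂ h₂ with h | h | h
  · exact c₂.eq_of_subset h₁ c₁.1 h
  · exact (c₁.eq_of_subset h₂ c₂.1 h).symm
  · obtain ⟨x, hx⟩ := hJ'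
    exact absurd (mem_inter.2 ⟨c₁.1.subset hx, c₂.1.subset hx⟩) (by simp [h])

lemma exists_coversIn_of_ssubset {K₀ J : Finset (Fin n)} (hK₀ : K₀ ∈ D) (hK₀J : K₀ ⊂ J) :
    ∃ K ∈ D, K₀ ⊆ K ∧ CoversIn D K J := by
  obtain ⟨K, hK₀K, ⟨hKT, hKmax⟩⟩ :=
    (D.filter (· ⊂ J)).exists_le_maximal (mem_filter.2 ⟨hK₀, hK₀J⟩)
  obtain ⟨hKD, hKJ⟩ := mem_filter.1 hKT
  refine ⟨K, hKD, hK₀K, hKJ, fun ⟨L, hLD, hKL, hLJ⟩ => ?_⟩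
  exact hKL.2 (hKmax (mem_filter.2 ⟨hLD, hLJ⟩) hKL.1)

lemma two_le_delta (hsingle : ∀ i : Fin n, {i} ∈ D) {J : Finset (Fin n)} (hJ : 2 ≤ J.card) :
    2 ≤ delta D J := by
  have singleton_ssubset {i : Fin n} (hi : i ∈ J) : {i} ⊂ J :=
    (singleton_subset_iff.2 hi).ssubset_of_ne (by rintro rfl; simp at hJ)
  obtain ⟨i, hi⟩ := card_pos.1 (by omega : 0 < J.card)
  obtain ⟨K, hKD, hiK, hK⟩ := exists_coversIn_of_ssubset (hsingle i) (singleton_ssubset hi)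
  obtain ⟨j, hjJ, hjK⟩ := exists_of_ssubset hK.1
  obtain ⟨L, hLD, hjL, hL⟩ := exists_coversIn_of_ssubset (hsingle j) (singleton_ssubset hjJ)
  refine one_lt_card.2 ⟨K, mem_filter.2 ⟨hKD, hK⟩, L, mem_filter.2 ⟨hLD, hL⟩, ?_⟩
  rintro rfl
  exact hjK (singleton_subset_iff.1 hjL)

lemma sum_delta_le_card_sub_one (hne : ∀ J ∈ D, J.Nonempty)
    (hlaminar : ∀ J ∈ D, ∀ J' ∈ D, J ⊆ J' ∨ J' ⊆ J ∨ J ∩ J' = ∅) :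
    ∑ J ∈ D, delta D J ≤ D.card - 1 := by
  rcases D.eq_empty_or_nonempty with rfl | hD
  · simp
  obtain ⟨M, hMD, hMmax⟩ := D.exists_maximal hD
  have hdisj : (D : Set (Finset (Fin n))).PairwiseDisjoint
      (fun J => D.filter (CoversIn D · J)) := by
    intro J₁ h₁ J₂ h₂ hJ
    refine disjoint_left.2 fun J' hJ'₁ hJ'₂ => hJ ?_
    rw [mem_filter] at hJ'₁ hJ'₂
    exact CoversIn.eq_of_laminar hlaminar (hne J' hJ'₁.1) h₁ h₂ hJ'₁.2 hJ'₂.2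
  have hcovered : D.biUnion (fun J => D.filter (CoversIn D · J)) ⊆ D.erase M := by
    intro J' hJ'
    obtain ⟨J, hJD, hJ'J⟩ := mem_biUnion.1 hJ'
    obtain ⟨hJ'D, hcov⟩ := mem_filter.1 hJ'J
    refine mem_erase.2 ⟨?_, hJ'D⟩
    rintro rfl
    exact hcov.1.2 (hMmax hJD hcov.1.1)
  calc ∑ J ∈ D, delta D J = (D.biUnion fun J => D.filter (CoversIn D · J)).card :=
        (card_biUnion hdisj).symm
    _ ≤ (D.erase M).card := card_le_card hcovered
    _ = D.card - 1 := card_erase_of_mem hMD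

lemma card_eq_card_filter_two_le_add (hne : ∀ J ∈ D, J.Nonempty)
    (hsingle : ∀ i : Fin n, {i} ∈ D) :
    D.card = (D.filter (fun J => 2 ≤ J.card)).card + n := by
  have hsmall : D.filter (fun J => ¬ 2 ≤ J.card) = univ.map ⟨singleton, singleton_injective⟩ := by
    ext J
    simp only [mem_filter, mem_map, mem_univ, true_and, Function.Embedding.coeFn_mk]
    constructor
    · rintro ⟨hJD, hJ⟩
      obtain ⟨i, rfl⟩ := card_eq_one.1 (show J.card = 1 by have := (hne J hJD).card_pos; omega)
      exact ⟨i, rfl⟩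
    · rintro ⟨i, rfl⟩
      exact ⟨hsingle i, by simp⟩
  rw [← card_filter_add_card_filter_not (fun J => 2 ≤ J.card), hsmall, card_map, card_univ,
    Fintype.card_fin]

lemma sum_delta_sub_one_le (hne : ∀ J ∈ D, J.Nonempty) (hsingle : ∀ i : Fin n, {i} ∈ D)
    (hlaminar : ∀ J ∈ D, ∀ J' ∈ D, J ⊆ J' ∨ J' ⊆ J ∨ J ∩ J' = ∅) :
    ∑ J ∈ D.filter (fun J => 2 ≤ J.card), (delta D J - 1) ≤ n - 1 := by
  have hsum := sum_delta_le_card_sub_one hne hlaminar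
  have hcard := card_eq_card_filter_two_le_add hne hsingle
  set B := D.filter (fun J => 2 ≤ J.card)
  have hB : ∑ J ∈ B, delta D J ≤ ∑ J ∈ D, delta D J :=
    sum_le_sum_of_subset (filter_subset _ D)
  have hsub : ∑ J ∈ B, (delta D J - 1) = ∑ J ∈ B, delta D J - B.card := by
    rw [sum_tsub_distrib _ fun J hJ => one_le_two.trans
      (two_le_delta hsingle (mem_filter.1 hJ).2), sum_const, smul_eq_mul, mul_one]
  omega

end Laminar

theorem stmt_7_general (n : ℕ) (D : Finset (Finset (Fin n)))
    (hne : ∀ J ∈ D, J.Nonempty)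
    (hsingle : ∀ i : Fin n, {i} ∈ D)
    (hlaminar : ∀ J ∈ D, ∀ J' ∈ D, J ⊆ J' ∨ J' ⊆ J ∨ J ∩ J' = ∅) :
    mInv D = 2 ^ (n - 1) ↔
      (D.filter (fun J => 2 ≤ J.card)).card = n - 1 ∧
        ∀ J ∈ D, 2 ≤ J.card → delta D J = 2 := by
  have hsum := sum_delta_sub_one_le hne hsingle hlaminar
  set B := D.filter (fun J => 2 ≤ J.card)
  have hmInv (hδ : ∀ J ∈ B, delta D J = 2) : mInv D = 2 ^ B.card := by
    rw [mInv, prod_congr rfl hδ, prod_const]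
  constructor
  · intro hm
    have hδ : ∀ J ∈ B, delta D J = 2 := by
      by_contra! ⟨J₀, hJ₀, hδJ₀⟩
      have hδ2 (J) (hJ : J ∈ B) := two_le_delta hsingle (mem_filter.1 hJ).2
      have hlt := prod_lt_two_pow_sum_pred (fun J hJ => (hδ2 J hJ).trans' one_le_two)
        ⟨J₀, hJ₀, by have := hδ2 J₀ hJ₀; omega⟩
      have hle := Nat.pow_le_pow_right two_pos hsum
      change ∏ J ∈ B, delta D J = _ at hm
      omega
    exact ⟨Nat.pow_right_injective le_rfl ((hmInv hδ).symm.trans hm),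
      fun J hJ h2 => hδ J (mem_filter.2 ⟨hJ, h2⟩)⟩
  · rintro ⟨hcard, hδ⟩
    rw [hmInv fun J hJ => hδ J (mem_filter.1 hJ).1 (mem_filter.1 hJ).2, hcard]

/-- The equality characterization in Watanabe's bound (proof of Corollary 4.3):
for a laminar family `D` on `{1,…,n}` containing all singletons, `m(D) = 2^{n−1}`
holds if and only if `#{J ∈ D : |J| ≥ 2} = n − 1` and `δ(J) = 2` for every
`J ∈ D` with `|J| ≥ 2`. -/
theorem stmt_7 (n : ℕ) (hn : 1 ≤ n) (D : Finset (Finset (Fin n)))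
    (hne : ∀ J ∈ D, J.Nonempty)
    (hsingle : ∀ i : Fin n, {i} ∈ D)
    (hlaminar : ∀ J ∈ D, ∀ J' ∈ D, J ⊆ J' ∨ J' ⊆ J ∨ J ∩ J' = ∅) :
    mInv D = 2 ^ (n - 1) ↔
      (D.filter (fun J => 2 ≤ J.card)).card = n - 1 ∧
        ∀ J ∈ D, 2 ≤ J.card → delta D J = 2 :=
  stmt_7_general n D hne hsingle hlaminar
end

section
/- Let n ≥ 2 and let 𝔻 = (D, w) be an n-dimensional connected special datum with unique maximal element J, and let J' be a maximal element of D \ {J}. Let 𝔻∖J = (D \ {J}, v) be the special datum with v(K) = w(K)/w(J') for every K ∈ D \ {J}. Then |G_𝔻| = w(J')^{n−1}·|G_{𝔻∖J}|. -/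
open Finset

/-- An `n`-dimensional special datum (Watanabe): a laminar family `D` of non-empty
subsets of `{1,…,n}` containing all singletons, with weights `w : D → ℕ₊` that are `1`
on maximal elements, strictly increase and divide along reverse inclusion, and agree on
elements covered by a common element. -/
structure IsSpecialDatum {n : ℕ} (D : Finset (Finset (Fin n))) (w : Finset (Fin n) → ℕ) : Prop where
  nonempty_mem : ∀ J ∈ D, J.Nonempty
  singleton_mem : ∀ i : Fin n, {i} ∈ D
  laminar : ∀ J ∈ D, ∀ J' ∈ D, J ⊆ J' ∨ J' ⊆ J ∨ J ∩ J' = ∅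
  w_pos : ∀ J ∈ D, 0 < w J
  w_max : ∀ J ∈ D, (∀ K ∈ D, J ⊆ K → J = K) → w J = 1
  w_lt : ∀ J ∈ D, ∀ J' ∈ D, J ⊂ J' → w J' < w J
  w_dvd : ∀ J ∈ D, ∀ J' ∈ D, J ⊂ J' → w J' ∣ w J
  w_cover : ∀ J₁ ∈ D, ∀ J₂ ∈ D, ∀ J ∈ D, CoversIn D J₁ J → CoversIn D J₂ J → w J₁ = w J₂

/-- The diagonal matrix `(ζ, ζ⁻¹; i, j)` whose `(i,i)` entry is `ζ`, `(j,j)` entry is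
`ζ⁻¹` and whose other diagonal entries are `1`, as an element of `SL(n, ℂ)`. -/
noncomputable def diagPair {n : ℕ} (ζ : ℂˣ) (i j : Fin n) :
    Matrix.SpecialLinearGroup (Fin n) ℂ :=
  ⟨Matrix.diagonal
      (fun k => (if k = i then (ζ : ℂ) else 1) * (if k = j then ((ζ⁻¹ : ℂˣ) : ℂ) else 1)),
    by rw [Matrix.det_diagonal, Finset.prod_mul_distrib]; simp⟩

/-- The group `G_𝔻` associated with a (special) datum `(D, w)`: the subgroup of
`SL(n, ℂ)` generated by the matrices `(ζ, ζ⁻¹; i, j)` over all `J₁, J₂, J ∈ D` with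
`J₁ ⋖ J` and `J₂ ⋖ J`, all `i ∈ J₁`, `j ∈ J₂`, and `ζ` a primitive `w(J₁)`-th root of
unity. -/
noncomputable def specialGroup (n : ℕ) (D : Finset (Finset (Fin n)))
    (w : Finset (Fin n) → ℕ) : Subgroup (Matrix.SpecialLinearGroup (Fin n) ℂ) :=
  Subgroup.closure
    { g | ∃ (J₁ J₂ J : Finset (Fin n)) (_ : J₁ ∈ D) (_ : J₂ ∈ D) (_ : J ∈ D)
        (_ : CoversIn D J₁ J) (_ : CoversIn D J₂ J) (i : Fin n) (_ : i ∈ J₁)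
        (j : Fin n) (_ : j ∈ J₂) (ζ : ℂˣ),
        IsPrimitiveRoot ζ (w J₁) ∧ g = diagPair ζ i j }

/-!
The top element `J` of `D` is all of `{1,…,n}`, and all children of `J` have weight `m = w(J')`.
Every generator of `G_𝔻` is diagonal, so `G_𝔻` is abelian and `g ↦ g ^ m` is a homomorphism on it.
Its image is `G_{𝔻∖J}`: generators coming from children of `J` are killed, the others become
generators of `𝔻∖J`, and every primitive `w(J₁)/m`-th root of unity is the `m`-th power of a
primitive `w(J₁)`-th one. Its kernel is the group of all diagonal matrices of determinant one with
`m`-th roots of unity on the diagonal: since the children of `J` cover `{1,…,n}`, `G_𝔻` contains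
every `(ζ, ζ⁻¹; i, j)` with `ζ ^ m = 1`, and these generate it. That group has order `m^(n-1)`.
-/

namespace Subgroup

variable {G : Type*} [Group G]

theorem pow_mem_of_mem_closure {S : Set G} {K : Subgroup G} {m : ℕ}
    (hcomm : ∀ x ∈ closure S, ∀ y ∈ closure S, Commute x y) (hS : ∀ s ∈ S, s ^ m ∈ K)
    {g : G} (hg : g ∈ closure S) : g ^ m ∈ K := by
  induction hg using closure_induction with
  | mem s hs => exact hS s hs
  | one => rw [one_pow]; exact K.one_mem
  | mul x y hx hy ihx ihy => rw [(hcomm x hx y hy).mul_pow]; exact K.mul_mem ihx ihy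
  | inv x _ ihx => rw [inv_pow]; exact K.inv_mem ihx

theorem exists_pow_eq_of_mem_closure {H : Subgroup G} {T : Set G} {m : ℕ}
    (hcomm : ∀ x ∈ H, ∀ y ∈ H, Commute x y) (hT : ∀ t ∈ T, ∃ g ∈ H, g ^ m = t)
    {k : G} (hk : k ∈ closure T) : ∃ g ∈ H, g ^ m = k := by
  induction hk using closure_induction with
  | mem t ht => exact hT t ht
  | one => exact ⟨1, H.one_mem, one_pow m⟩
  | mul x y _ _ ihx ihy =>
    obtain ⟨a, ha, rfl⟩ := ihx
    obtain ⟨b, hb, rfl⟩ := ihy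
    exact ⟨a * b, H.mul_mem ha hb, (hcomm a ha b hb).mul_pow m⟩
  | inv x _ ihx =>
    obtain ⟨a, ha, rfl⟩ := ihx
    exact ⟨a⁻¹, H.inv_mem ha, inv_pow a m⟩

theorem card_eq_card_mul_card_pow_eq_one {H K : Subgroup G} {m : ℕ}
    (hcomm : ∀ x ∈ H, ∀ y ∈ H, Commute x y) (hpow : ∀ g ∈ H, g ^ m ∈ K)
    (hsurj : ∀ k ∈ K, ∃ g ∈ H, g ^ m = k) :
    Nat.card H = Nat.card K * Nat.card {g // g ∈ H ∧ g ^ m = 1} := by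
  let φ : H →* K :=
    { toFun := fun g => ⟨g ^ m, hpow g g.2⟩
      map_one' := Subtype.ext (one_pow m)
      map_mul' := fun g h => Subtype.ext ((hcomm g g.2 h h.2).mul_pow m) }
  have hφ : Function.Surjective φ := by
    rintro ⟨k, hk⟩
    obtain ⟨g, hg, rfl⟩ := hsurj k hk
    exact ⟨⟨g, hg⟩, rfl⟩
  have hker : φ.ker ≃ {g // g ∈ H ∧ g ^ m = 1} :=
    (Equiv.subtypeEquivRight fun g => by simp [φ, Subtype.ext_iff]).trans
      (Equiv.subtypeSubtypeEquivSubtypeInter (· ∈ H) (· ^ m = 1))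
  rw [φ.ker.card_eq_card_quotient_mul_card_subgroup,
    Nat.card_congr (QuotientGroup.quotientKerEquivOfSurjective φ hφ).toEquiv, Nat.card_congr hker]

end Subgroup

theorem Nat.card_subtype_prod_eq_one {A ι : Type*} [CommGroup A] [Finite A] [Fintype ι]
    [DecidableEq ι] [Nonempty ι] :
    Nat.card {d : ι → A // ∏ i, d i = 1} = Nat.card A ^ (Fintype.card ι - 1) := by
  let π : (ι → A) →* A :=
    { toFun := fun d => ∏ i, d i
      map_one' := Finset.prod_const_one
      map_mul' := fun _ _ => Finset.prod_mul_distrib }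
  obtain ⟨i₀⟩ := ‹Nonempty ι›
  have hπ : Function.Surjective π := fun a => ⟨Pi.mulSingle i₀ a, by simp [π]⟩
  have h := π.ker.card_eq_card_quotient_mul_card_subgroup
  rw [Nat.card_congr (QuotientGroup.quotientKerEquivOfSurjective π hπ).toEquiv, Nat.card_pi,
    Finset.prod_const, Finset.card_univ, ← Nat.sub_one_add_one Fintype.card_ne_zero,
    pow_succ'] at h
  exact (Nat.eq_of_mul_eq_mul_left Nat.card_pos h).symm

namespace Matrix

variable {ι R : Type*} [Fintype ι] [DecidableEq ι]

theorem IsDiag.mul [NonUnitalNonAssocSemiring R] {A B : Matrix ι ι R} (hA : A.IsDiag)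
    (hB : B.IsDiag) : (A * B).IsDiag := by
  rw [← hA.diagonal_diag, ← hB.diagonal_diag, diagonal_mul_diagonal]
  exact isDiag_diagonal _

theorem IsDiag.adjugate [CommRing R] {A : Matrix ι ι R} (hA : A.IsDiag) :
    A.adjugate.IsDiag := by
  rw [← hA.diagonal_diag, adjugate_diagonal]
  exact isDiag_diagonal _

theorem IsDiag.commute [CommSemiring R] {A B : Matrix ι ι R} (hA : A.IsDiag) (hB : B.IsDiag) :
    Commute A B := by
  rw [← hA.diagonal_diag, ← hB.diagonal_diag]
  exact (Commute.all _ _).map (diagonalRingHom ι R)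

namespace SpecialLinearGroup

variable (ι R) in
def diagonalSubgroup [CommRing R] : Subgroup (SpecialLinearGroup ι R) where
  carrier := {g | (g : Matrix ι ι R).IsDiag}
  mul_mem' ha hb := IsDiag.mul ha hb
  one_mem' := isDiag_one
  inv_mem' ha := IsDiag.adjugate ha

theorem commute_of_mem_diagonalSubgroup [CommRing R] {g h : SpecialLinearGroup ι R}
    (hg : g ∈ diagonalSubgroup ι R) (hh : h ∈ diagonalSubgroup ι R) : Commute g h :=
  Subtype.ext (IsDiag.commute hg hh)

theorem pow_eq_one_iff_of_mem_diagonalSubgroup [CommRing R] {g : SpecialLinearGroup ι R}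
    (hg : g ∈ diagonalSubgroup ι R) {m : ℕ} :
    g ^ m = 1 ↔ ∀ i, (g : Matrix ι ι R) i i ^ m = 1 := by
  have hg' : (g : Matrix ι ι R).IsDiag := hg
  have hpow : ((g ^ m : SpecialLinearGroup ι R) : Matrix ι ι R) =
      diagonal fun i => (g : Matrix ι ι R) i i ^ m := by
    rw [coe_pow]
    conv_lhs => rw [← hg'.diagonal_diag, diagonal_pow]
    rfl
  refine ⟨fun h i => ?_, fun h => Subtype.ext ?_⟩
  · have hii := congrFun (congrFun hpow i) i
    rwa [h, coe_one, one_apply_eq, diagonal_apply_eq, eq_comm] at hii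
  · rw [hpow, coe_one, ← diagonal_one]
    exact congrArg diagonal (funext h)

noncomputable def diagonalOfRootsOfUnity (m : ℕ) [NeZero m]
    (d : {d : ι → rootsOfUnity m ℂ // ∏ i, d i = 1}) :
    {g // g ∈ diagonalSubgroup ι ℂ ∧ g ^ m = 1} :=
  ⟨⟨diagonal fun i => ((d.1 i : ℂˣ) : ℂ), by
      rw [det_diagonal, ← Units.coe_prod, ← Subgroup.val_finsetProd, d.2]
      rfl⟩,
    isDiag_diagonal _, (pow_eq_one_iff_of_mem_diagonalSubgroup (isDiag_diagonal _)).2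
      fun i => by simpa using (mem_rootsOfUnity' m _).1 (d.1 i).2⟩

theorem diagonalOfRootsOfUnity_bijective (m : ℕ) [NeZero m] :
    Function.Bijective (diagonalOfRootsOfUnity (ι := ι) m) := by
  refine ⟨fun d d' h => ?_, fun g => ?_⟩
  · have hentry (i : ι) : ((d.1 i : ℂˣ) : ℂ) = ((d'.1 i : ℂˣ) : ℂ) := by
      simpa [diagonalOfRootsOfUnity] using
        congrArg (fun g : {g // g ∈ diagonalSubgroup ι ℂ ∧ g ^ m = 1} => (g.1 : Matrix ι ι ℂ) i i) h
    exact Subtype.ext (funext fun i => Subtype.ext (Units.ext (hentry i)))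
  · obtain ⟨g, hg, hgm⟩ := g
    have hg' : (g : Matrix ι ι ℂ).IsDiag := hg
    have hroot := (pow_eq_one_iff_of_mem_diagonalSubgroup hg).1 hgm
    have hdet : ∏ i, (g : Matrix ι ι ℂ) i i = 1 := by
      have h1 : (g : Matrix ι ι ℂ).det = 1 := g.2
      rwa [← hg'.diagonal_diag, det_diagonal] at h1
    refine ⟨⟨fun i => rootsOfUnity.mkOfPowEq _ (hroot i), ?_⟩, ?_⟩
    · rw [← Subtype.coe_inj, ← Units.val_inj, Subgroup.val_finsetProd, Units.coe_prod]
      simpa [rootsOfUnity.coe_mkOfPowEq] using hdet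
    · refine Subtype.ext (Subtype.ext ?_)
      conv_rhs => rw [← hg'.diagonal_diag]
      exact congrArg diagonal (funext fun i => rootsOfUnity.coe_mkOfPowEq _)

theorem card_pow_eq_one_diagonalSubgroup [Nonempty ι] (m : ℕ) [NeZero m] :
    Nat.card {g // g ∈ diagonalSubgroup ι ℂ ∧ g ^ m = 1} = m ^ (Fintype.card ι - 1) := by
  rw [← Nat.card_eq_of_bijective _ (diagonalOfRootsOfUnity_bijective m), Nat.card_subtype_prod_eq_one,
    Complex.card_rootsOfUnity]

end SpecialLinearGroup

end Matrix

open Matrix Matrix.SpecialLinearGroup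

section

variable {n : ℕ}

theorem diagPair_mem_diagonalSubgroup (ζ : ℂˣ) (i j : Fin n) :
    diagPair ζ i j ∈ diagonalSubgroup (Fin n) ℂ :=
  isDiag_diagonal _

theorem diagPair_pow (ζ : ℂˣ) (i j : Fin n) (a : ℕ) :
    diagPair ζ i j ^ a = diagPair (ζ ^ a) i j := by
  apply Subtype.ext
  rw [Matrix.SpecialLinearGroup.coe_pow]
  refine (diagonal_pow _ a).trans (congrArg diagonal (funext fun k => ?_))
  simp only [Pi.pow_apply]
  split_ifs <;> simp

theorem diagPair_one (i j : Fin n) : diagPair 1 i j = 1 :=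
  Subtype.ext <| (congrArg diagonal (funext fun k => by simp)).trans diagonal_one

theorem diagPair_eq_diag2n (ζ : ℂˣ) {i j : Fin n} (hij : i ≠ j) :
    diagPair ζ i j = diag2n hij (ζ : ℂ) ζ.ne_zero := by
  refine Subtype.ext (congrArg diagonal (funext fun k => ?_))
  by_cases hki : k = i
  · simp [hki, hij]
  · by_cases hkj : k = j <;> simp [hki, hkj, hij.symm]

theorem mem_of_mem_diagonalSubgroup_of_pow_eq_one [NeZero n] {m : ℕ}
    {H : Subgroup (SpecialLinearGroup (Fin n) ℂ)}
    (hH : ∀ x : ℂˣ, x ^ m = 1 → ∀ i j, diagPair x i j ∈ H)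
    {g : SpecialLinearGroup (Fin n) ℂ} (hg : g ∈ diagonalSubgroup (Fin n) ℂ) (hgm : g ^ m = 1) :
    g ∈ H := by
  have hg' : (g : Matrix (Fin n) (Fin n) ℂ).IsDiag := hg
  have hdet : (diagonal (g : Matrix (Fin n) (Fin n) ℂ).diag).det = 1 := by
    rw [hg'.diagonal_diag]; exact g.2
  have hroot := (pow_eq_one_iff_of_mem_diagonalSubgroup hg).1 hgm
  rw [show g = ⟨_, hdet⟩ from Subtype.ext hg'.diagonal_diag.symm, diag_eq_diag2n_prod 0]
  refine Subgroup.noncommProd_mem _ _ fun i _ => ?_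
  split_ifs with hi
  · have hne := diagonal_neZero _ hdet i
    have hmem := hH (Units.mk0 _ hne) (Units.ext (by simpa using hroot i)) i 0
    rwa [diagPair_eq_diag2n _ hi] at hmem
  · exact H.one_mem

end

theorem IsPrimitiveRoot.exists_isPrimitiveRoot_pow_eq {R : Type*} [CommRing R] [IsDomain R]
    {M k : ℕ} [NeZero M] [NeZero k] {ζ₀ ξ : Rˣ} (hζ₀ : IsPrimitiveRoot ζ₀ (M * k))
    (hξ : IsPrimitiveRoot ξ k) : ∃ ζ : Rˣ, IsPrimitiveRoot ζ (M * k) ∧ ζ ^ M = ξ := by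
  have hpow : IsPrimitiveRoot (ζ₀ ^ M) k :=
    hζ₀.pow (Nat.mul_pos (NeZero.pos M) (NeZero.pos k)) rfl
  obtain ⟨b, -, rfl⟩ := hpow.eq_pow_of_mem_rootsOfUnity ((mem_rootsOfUnity k ξ).2 hξ.pow_eq_one)
  have hb : b.Coprime k := (hpow.pow_iff_coprime (NeZero.pos k) b).1 hξ
  -- lift the residue `b` to a unit modulo `M * k`
  have : NeZero (M * k) := ⟨mul_ne_zero (NeZero.ne M) (NeZero.ne k)⟩
  obtain ⟨u, hu⟩ := ZMod.unitsMap_surjective (dvd_mul_left k M) (ZMod.unitOfCoprime b hb)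
  refine ⟨ζ₀ ^ (u : ZMod (M * k)).val, hζ₀.pow_of_coprime _ (ZMod.val_coe_unit_coprime u), ?_⟩
  have hcong : (u : ZMod (M * k)).val ≡ b [MOD k] := by
    rw [← ZMod.natCast_eq_natCast_iff]
    simpa [ZMod.unitsMap_def, ZMod.natCast_val] using congrArg Units.val hu
  rw [← pow_mul, mul_comm, pow_mul, pow_eq_pow_iff_modEq, ← hpow.eq_orderOf]
  exact hcong

theorem Complex.exists_isPrimitiveRoot_units (m : ℕ) [NeZero m] :
    ∃ ζ : ℂˣ, IsPrimitiveRoot ζ m :=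
  ⟨_, (Complex.isPrimitiveRoot_exp m (NeZero.ne m)).isUnit_unit (NeZero.ne m)⟩

theorem Finset.exists_maximal_superset {α : Type*} {S : Finset (Finset α)} {K : Finset α}
    (hK : K ∈ S) : ∃ L ∈ S, K ⊆ L ∧ ∀ M ∈ S, L ⊆ M → L = M := by
  obtain ⟨L, hKL, hL⟩ := S.exists_le_maximal hK
  exact ⟨L, hL.prop, hKL, fun M hM hLM => le_antisymm hLM (hL.2 hM hLM)⟩

section

variable {n : ℕ} {D : Finset (Finset (Fin n))}

theorem mem_erase_univ_of_ssubset {K K₀ : Finset (Fin n)} (hK : K ∈ D) (h : K ⊂ K₀) :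
    K ∈ D.erase univ :=
  mem_erase.2 ⟨ssubset_univ_iff.1 (h.trans_subset (subset_univ K₀)), hK⟩

theorem coversIn_erase_univ_iff {K₁ K₀ : Finset (Fin n)} :
    CoversIn (D.erase univ) K₁ K₀ ↔ CoversIn D K₁ K₀ :=
  ⟨fun h => ⟨h.1, fun ⟨K, hK, h₁, h₂⟩ => h.2 ⟨K, mem_erase_univ_of_ssubset hK h₂, h₁, h₂⟩⟩,
    fun h => ⟨h.1, fun ⟨K, hK, h₁, h₂⟩ => h.2 ⟨K, mem_of_mem_erase hK, h₁, h₂⟩⟩⟩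

theorem coversIn_univ_of_maximal_erase {K : Finset (Fin n)} (hK : K ∈ D.erase univ)
    (hKmax : ∀ L ∈ D.erase univ, K ⊆ L → K = L) : CoversIn D K univ :=
  ⟨ssubset_univ_iff.2 (ne_of_mem_erase hK), fun ⟨L, hL, hKL, hLu⟩ =>
    hKL.ne (hKmax L (mem_erase.2 ⟨hLu.ne, hL⟩) hKL.subset)⟩

theorem exists_coversIn_univ_superset {K : Finset (Fin n)} (hK : K ∈ D.erase univ) :
    ∃ L ∈ D, K ⊆ L ∧ CoversIn D L univ := by
  obtain ⟨L, hL, hKL, hLmax⟩ := exists_maximal_superset hK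
  exact ⟨L, mem_of_mem_erase hL, hKL, coversIn_univ_of_maximal_erase hL hLmax⟩

end

section

variable {n : ℕ} {D : Finset (Finset (Fin n))} {w : Finset (Fin n) → ℕ}

theorem specialGroup_le_diagonalSubgroup (n : ℕ) (D : Finset (Finset (Fin n)))
    (w : Finset (Fin n) → ℕ) : specialGroup n D w ≤ diagonalSubgroup (Fin n) ℂ :=
  (Subgroup.closure_le _).2 <| by
    rintro _ ⟨_, _, _, _, _, _, _, _, i, _, j, _, ζ, _, rfl⟩
    exact diagPair_mem_diagonalSubgroup ζ i j

theorem commute_of_mem_specialGroup {g h : SpecialLinearGroup (Fin n) ℂ}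
    (hg : g ∈ specialGroup n D w) (hh : h ∈ specialGroup n D w) : Commute g h :=
  commute_of_mem_diagonalSubgroup (specialGroup_le_diagonalSubgroup n D w hg)
    (specialGroup_le_diagonalSubgroup n D w hh)

theorem diagPair_mem_specialGroup {J : Finset (Fin n)} {m : ℕ} [NeZero m] (hJ : J ∈ D)
    (hchild : ∀ i, ∃ C ∈ D, i ∈ C ∧ CoversIn D C J ∧ w C = m) {x : ℂˣ} (hx : x ^ m = 1)
    (i j : Fin n) : diagPair x i j ∈ specialGroup n D w := by
  obtain ⟨ζ, hζ⟩ := Complex.exists_isPrimitiveRoot_units m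
  obtain ⟨c, -, rfl⟩ := hζ.eq_pow_of_mem_rootsOfUnity ((mem_rootsOfUnity m x).2 hx)
  obtain ⟨Ci, hCi, hiCi, hCicov, hCiw⟩ := hchild i
  obtain ⟨Cj, hCj, hjCj, hCjcov, -⟩ := hchild j
  have hgen : diagPair ζ i j ∈ specialGroup n D w := Subgroup.subset_closure
    ⟨Ci, Cj, J, hCi, hCj, hJ, hCicov, hCjcov, i, hiCi, j, hjCj, ζ, hCiw ▸ hζ, rfl⟩
  rw [← diagPair_pow]
  exact Subgroup.pow_mem _ hgen c

theorem card_pow_eq_one_specialGroup [NeZero n] {J : Finset (Fin n)} {m : ℕ} [NeZero m]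
    (hJ : J ∈ D) (hchild : ∀ i, ∃ C ∈ D, i ∈ C ∧ CoversIn D C J ∧ w C = m) :
    Nat.card {g // g ∈ specialGroup n D w ∧ g ^ m = 1} = m ^ (n - 1) := by
  refine (Nat.card_congr (Equiv.subtypeEquivRight fun g => ⟨fun h => ?_, fun h => ?_⟩)).trans
    ((card_pow_eq_one_diagonalSubgroup m).trans (by rw [Fintype.card_fin]))
  · exact ⟨specialGroup_le_diagonalSubgroup n D w h.1, h.2⟩
  · exact ⟨mem_of_mem_diagonalSubgroup_of_pow_eq_one
      (fun x hx i j => diagPair_mem_specialGroup hJ hchild hx i j) h.1 h.2, h.2⟩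

end

namespace IsSpecialDatum

variable {n : ℕ} {D : Finset (Finset (Fin n))} {w : Finset (Fin n) → ℕ} {J' : Finset (Fin n)}

theorem eq_univ_of_forall_maximal_eq (hD : IsSpecialDatum D w) {J : Finset (Fin n)}
    (hJuniq : ∀ K ∈ D, (∀ L ∈ D, K ⊆ L → K = L) → K = J) : J = univ :=
  eq_univ_of_forall fun i => by
    obtain ⟨L, hL, hiL, hLmax⟩ := exists_maximal_superset (hD.singleton_mem i)
    exact hJuniq L hL hLmax ▸ hiL (mem_singleton_self i)

theorem w_dvd_of_mem_erase_univ (hD : IsSpecialDatum D w) (hu : univ ∈ D) (hJ' : J' ∈ D)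
    (hJ'cov : CoversIn D J' univ) {K : Finset (Fin n)} (hK : K ∈ D.erase univ) : w J' ∣ w K := by
  obtain ⟨L, hL, hKL, hLcov⟩ := exists_coversIn_univ_superset hK
  rw [← hD.w_cover L hL J' hJ' univ hu hLcov hJ'cov]
  rcases hKL.eq_or_ssubset with rfl | hKL
  · exact dvd_rfl
  · exact hD.w_dvd K (mem_of_mem_erase hK) L hL hKL

theorem exists_coversIn_univ_of_mem (hD : IsSpecialDatum D w) (hu : univ ∈ D) (hJ' : J' ∈ D)
    (hJ'cov : CoversIn D J' univ) (i : Fin n) :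
    ∃ C ∈ D, i ∈ C ∧ CoversIn D C univ ∧ w C = w J' := by
  -- `{i} = univ` would force `J' ⊂ {i}`, i.e. `J' = ∅`
  have hi : {i} ∈ D.erase univ := mem_erase.2 ⟨fun h => (hD.nonempty_mem J' hJ').ne_empty
    (ssubset_singleton_iff.1 (h ▸ hJ'cov.1)), hD.singleton_mem i⟩
  obtain ⟨C, hC, hiC, hCcov⟩ := exists_coversIn_univ_superset hi
  exact ⟨C, hC, hiC (mem_singleton_self i), hCcov, hD.w_cover C hC J' hJ' univ hu hCcov hJ'cov⟩

theorem pow_mem_specialGroup_erase_univ (hD : IsSpecialDatum D w) (hu : univ ∈ D)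
    (hJ' : J' ∈ D) (hJ'cov : CoversIn D J' univ) {g : SpecialLinearGroup (Fin n) ℂ}
    (hg : g ∈ specialGroup n D w) :
    g ^ w J' ∈ specialGroup n (D.erase univ) (fun K => w K / w J') := by
  refine Subgroup.pow_mem_of_mem_closure (fun x hx y hy => commute_of_mem_specialGroup hx hy)
    ?_ hg
  rintro _ ⟨J₁, J₂, J₀, hJ₁, hJ₂, hJ₀, hc₁, hc₂, i, hi, j, hj, ζ, hζ, rfl⟩
  rw [diagPair_pow]
  by_cases hJ₀u : J₀ = univ
  · subst hJ₀u
    rw [← hD.w_cover J₁ hJ₁ J' hJ' univ hu hc₁ hJ'cov, hζ.pow_eq_one, diagPair_one]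
    exact Subgroup.one_mem _
  · have hJ₁u := mem_erase_univ_of_ssubset hJ₁ hc₁.1
    have hdvd := hD.w_dvd_of_mem_erase_univ hu hJ' hJ'cov hJ₁u
    exact Subgroup.subset_closure ⟨J₁, J₂, J₀, hJ₁u, mem_erase_univ_of_ssubset hJ₂ hc₂.1,
      mem_erase.2 ⟨hJ₀u, hJ₀⟩, coversIn_erase_univ_iff.2 hc₁, coversIn_erase_univ_iff.2 hc₂,
      i, hi, j, hj, ζ ^ w J', hζ.pow (hD.w_pos J₁ hJ₁) (Nat.mul_div_cancel' hdvd).symm, rfl⟩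

theorem exists_pow_eq_of_mem_specialGroup_erase_univ (hD : IsSpecialDatum D w) (hu : univ ∈ D)
    (hJ' : J' ∈ D) (hJ'cov : CoversIn D J' univ) {h : SpecialLinearGroup (Fin n) ℂ}
    (hh : h ∈ specialGroup n (D.erase univ) (fun K => w K / w J')) :
    ∃ g ∈ specialGroup n D w, g ^ w J' = h := by
  have : NeZero (w J') := ⟨(hD.w_pos J' hJ').ne'⟩
  refine Subgroup.exists_pow_eq_of_mem_closure (fun x hx y hy => commute_of_mem_specialGroup hx hy)
    ?_ hh
  rintro _ ⟨J₁, J₂, J₀, hJ₁, hJ₂, hJ₀, hc₁, hc₂, i, hi, j, hj, ξ, hξ, rfl⟩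
  have hdvd := hD.w_dvd_of_mem_erase_univ hu hJ' hJ'cov hJ₁
  have : NeZero (w J₁ / w J') := ⟨(Nat.div_pos (Nat.le_of_dvd
    (hD.w_pos J₁ (mem_of_mem_erase hJ₁)) hdvd) (NeZero.pos _)).ne'⟩
  obtain ⟨ζ₀, hζ₀⟩ := Complex.exists_isPrimitiveRoot_units (w J' * (w J₁ / w J'))
  obtain ⟨ζ, hζ, rfl⟩ := hζ₀.exists_isPrimitiveRoot_pow_eq hξ
  rw [Nat.mul_div_cancel' hdvd] at hζ
  refine ⟨diagPair ζ i j, Subgroup.subset_closure ⟨J₁, J₂, J₀, mem_of_mem_erase hJ₁,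
    mem_of_mem_erase hJ₂, mem_of_mem_erase hJ₀, coversIn_erase_univ_iff.1 hc₁,
    coversIn_erase_univ_iff.1 hc₂, i, hi, j, hj, ζ, hζ, rfl⟩, diagPair_pow ζ i j _⟩

end IsSpecialDatum

theorem stmt_9_general (n : ℕ) (D : Finset (Finset (Fin n)))
    (w : Finset (Fin n) → ℕ) (hD : IsSpecialDatum D w)
    (J : Finset (Fin n)) (hJ : J ∈ D)
    (hJuniq : ∀ K ∈ D, (∀ L ∈ D, K ⊆ L → K = L) → K = J)
    (J' : Finset (Fin n)) (hJ' : J' ∈ D.erase J)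
    (hJ'max : ∀ K ∈ D.erase J, J' ⊆ K → J' = K) :
    Nat.card (specialGroup n D w) =
      w J' ^ (n - 1) * Nat.card (specialGroup n (D.erase J) (fun K => w K / w J')) := by
  obtain rfl := hD.eq_univ_of_forall_maximal_eq hJuniq
  have hJ'D := mem_of_mem_erase hJ'
  have hJ'cov := coversIn_univ_of_maximal_erase hJ' hJ'max
  have : NeZero (w J') := ⟨(hD.w_pos J' hJ'D).ne'⟩
  obtain ⟨i₀, -⟩ := hD.nonempty_mem J' hJ'D
  have : NeZero n := ⟨i₀.pos.ne'⟩
  rw [Subgroup.card_eq_card_mul_card_pow_eq_one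
      (fun x hx y hy => commute_of_mem_specialGroup hx hy)
      (fun g hg => hD.pow_mem_specialGroup_erase_univ hJ hJ'D hJ'cov hg)
      (fun h hh => hD.exists_pow_eq_of_mem_specialGroup_erase_univ hJ hJ'D hJ'cov hh),
    card_pow_eq_one_specialGroup hJ (hD.exists_coversIn_univ_of_mem hJ hJ'D hJ'cov), mul_comm]

/-- Lemma 2.12: let `𝔻 = (D, w)` be an `n`-dimensional connected special datum
(`n ≥ 2`) with unique maximal element `J`, let `J'` be a maximal element of `D \ {J}`
and let `𝔻∖J = (D \ {J}, v)` with `v(K) = w(K)/w(J')`. Then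
`|G_𝔻| = w(J')^{n−1} · |G_{𝔻∖J}|`. -/
theorem stmt_9 (n : ℕ) (hn : 2 ≤ n) (D : Finset (Finset (Fin n)))
    (w : Finset (Fin n) → ℕ) (hD : IsSpecialDatum D w)
    (J : Finset (Fin n)) (hJ : J ∈ D)
    (hJmax : ∀ K ∈ D, J ⊆ K → J = K)
    (hJuniq : ∀ K ∈ D, (∀ L ∈ D, K ⊆ L → K = L) → K = J)
    (J' : Finset (Fin n)) (hJ' : J' ∈ D.erase J)
    (hJ'max : ∀ K ∈ D.erase J, J' ⊆ K → J' = K) :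
    Nat.card (specialGroup n D w) =
      w J' ^ (n - 1) * Nat.card (specialGroup n (D.erase J) (fun K => w K / w J')) :=
  stmt_9_general n D w hD J hJ hJuniq J' hJ' hJ'max
end
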